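/- Let P and Q be positive definite n×n matrices and let λ ∈ (0,1). Then the Minkowski sum E(p, P) + E(q, Q) is contained in the ellipsoid E(p+q, (1/λ) P + (1/(1−λ)) Q). -/

import Mathlib

/-!
With `u = x - p` and `v = y - q`, the claim reduces to
`(u + v)ᵀ (A + B)⁻¹ (u + v) ≤ uᵀ A⁻¹ u + vᵀ B⁻¹ v` for `A = P / λ`, `B = Q / (1 - λ)`,
since the right-hand side is `λ uᵀ P⁻¹ u + (1 - λ) vᵀ Q⁻¹ v ≤ 1`.
That inequality comes from the variational formula `xᵀ M⁻¹ x = max_y (2 yᵀ x - yᵀ M y)`: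
evaluating both terms on the right at the maximiser `y` for `A + B` and `u + v`
gives exactly the left-hand side.
-/

open Matrix

namespace Matrix

variable {ι : Type*} [Fintype ι]

theorem IsHermitian.dotProduct_mulVec_comm {M : Matrix ι ι ℝ} (hM : M.IsHermitian)
    (x y : ι → ℝ) : x ⬝ᵥ M *ᵥ y = y ⬝ᵥ M *ᵥ x := by
  rw [dotProduct_mulVec, dotProduct_comm, ← vecMul_transpose,
    (isHermitian_iff_isSymm.mp hM).eq]

variable [DecidableEq ι]

theorem dotProduct_smul_inv_mulVec {M : Matrix ι ι ℝ} (hM : IsUnit M.det) {c : ℝ} (hc : c ≠ 0)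
    (x : ι → ℝ) : x ⬝ᵥ (c • M)⁻¹ *ᵥ x = c⁻¹ * (x ⬝ᵥ M⁻¹ *ᵥ x) := by
  have hinv : (c • M)⁻¹ = c⁻¹ • M⁻¹ := by
    simpa [Units.smul_def] using inv_smul' M (Units.mk0 c hc) hM
  rw [hinv, smul_mulVec, dotProduct_smul, smul_eq_mul]

theorem PosDef.two_mul_dotProduct_sub_le {M : Matrix ι ι ℝ} (hM : M.PosDef) (x y : ι → ℝ) :
    2 * (y ⬝ᵥ x) - y ⬝ᵥ M *ᵥ y ≤ x ⬝ᵥ M⁻¹ *ᵥ x := by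
  set w := M⁻¹ *ᵥ x
  have hMw : M *ᵥ w = x := by
    rw [mulVec_mulVec, mul_nonsing_inv _ (M.isUnit_iff_isUnit_det.mp hM.isUnit), one_mulVec]
  have hsq : 0 ≤ (y - w) ⬝ᵥ M *ᵥ (y - w) := hM.posSemidef.dotProduct_mulVec_nonneg (y - w)
  have hexp : (y - w) ⬝ᵥ M *ᵥ (y - w) = y ⬝ᵥ M *ᵥ y - 2 * (y ⬝ᵥ x) + x ⬝ᵥ M⁻¹ *ᵥ x := by
    rw [mulVec_sub, sub_dotProduct, dotProduct_sub, dotProduct_sub, hMw,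
      hM.1.dotProduct_mulVec_comm w y, hMw, dotProduct_comm w x]
    ring
  linarith

theorem PosDef.dotProduct_inv_mulVec_eq {M : Matrix ι ι ℝ} (hM : M.PosDef) (x : ι → ℝ) :
    x ⬝ᵥ M⁻¹ *ᵥ x = 2 * (M⁻¹ *ᵥ x ⬝ᵥ x) - M⁻¹ *ᵥ x ⬝ᵥ M *ᵥ (M⁻¹ *ᵥ x) := by
  rw [mulVec_mulVec, mul_nonsing_inv _ (M.isUnit_iff_isUnit_det.mp hM.isUnit), one_mulVec,
    dotProduct_comm x]
  ring

theorem PosDef.dotProduct_add_inv_mulVec_le {A B : Matrix ι ι ℝ} (hA : A.PosDef)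
    (hB : B.PosDef) (u v : ι → ℝ) :
    (u + v) ⬝ᵥ (A + B)⁻¹ *ᵥ (u + v) ≤ u ⬝ᵥ A⁻¹ *ᵥ u + v ⬝ᵥ B⁻¹ *ᵥ v := by
  set y := (A + B)⁻¹ *ᵥ (u + v)
  calc (u + v) ⬝ᵥ (A + B)⁻¹ *ᵥ (u + v)
      = (2 * (y ⬝ᵥ u) - y ⬝ᵥ A *ᵥ y) + (2 * (y ⬝ᵥ v) - y ⬝ᵥ B *ᵥ y) := by
        rw [(hA.add hB).dotProduct_inv_mulVec_eq, add_mulVec, dotProduct_add, dotProduct_add]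
        ring
    _ ≤ u ⬝ᵥ A⁻¹ *ᵥ u + v ⬝ᵥ B⁻¹ *ᵥ v :=
        add_le_add (hA.two_mul_dotProduct_sub_le u y) (hB.two_mul_dotProduct_sub_le v y)

end Matrix

theorem minkowski_sum_ellipsoids_subset {n : ℕ}
    (P Q : Matrix (Fin n) (Fin n) ℝ) (hP : P.PosDef) (hQ : Q.PosDef)
    (p q : Fin n → ℝ) (lam : ℝ) (hlam : lam ∈ Set.Ioo (0 : ℝ) 1) :
    {z : Fin n → ℝ | ∃ x y : Fin n → ℝ,
        (x - p) ⬝ᵥ P⁻¹.mulVec (x - p) ≤ 1 ∧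
        (y - q) ⬝ᵥ Q⁻¹.mulVec (y - q) ≤ 1 ∧ z = x + y} ⊆
      {z : Fin n → ℝ |
        (z - (p + q)) ⬝ᵥ ((1 / lam) • P + (1 / (1 - lam)) • Q)⁻¹.mulVec (z - (p + q)) ≤ 1} := by
  rintro _ ⟨x, y, hx, hy, rfl⟩
  obtain ⟨hlam0, hlam1⟩ := hlam
  have hlam1' : 0 < 1 - lam := sub_pos.mpr hlam1
  have hsplit : x + y - (p + q) = (x - p) + (y - q) := by abel
  have hPdet := P.isUnit_iff_isUnit_det.mp hP.isUnit
  have hQdet := Q.isUnit_iff_isUnit_det.mp hQ.isUnit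
  calc (x + y - (p + q)) ⬝ᵥ ((1 / lam) • P + (1 / (1 - lam)) • Q)⁻¹ *ᵥ (x + y - (p + q))
      ≤ (x - p) ⬝ᵥ ((1 / lam) • P)⁻¹ *ᵥ (x - p)
          + (y - q) ⬝ᵥ ((1 / (1 - lam)) • Q)⁻¹ *ᵥ (y - q) := by
        rw [hsplit]
        exact (hP.smul (by positivity)).dotProduct_add_inv_mulVec_le (hQ.smul (by positivity)) _ _
    _ = lam * ((x - p) ⬝ᵥ P⁻¹ *ᵥ (x - p)) + (1 - lam) * ((y - q) ⬝ᵥ Q⁻¹ *ᵥ (y - q)) := by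
        rw [dotProduct_smul_inv_mulVec hPdet (by positivity),
          dotProduct_smul_inv_mulVec hQdet (by positivity), one_div, one_div, inv_inv, inv_inv]
    _ ≤ lam * 1 + (1 - lam) * 1 := by gcongr
    _ = 1 := by ring
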